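/- arXiv:2307.14095 — 4 statements merged into one kernel-verified Lean document; each statement's English description precedes it below -/
import Mathlib

section
/- Let k be a field, and let f₁ : X₁ → Y and f₂ : X₂ → Y be morphisms of schemes of finite type over k. Let U₁ ⊆ X₁ be an open subscheme, and let Ū₁ denote the schematic closure of U₁ in X₁ (the scheme-theoretic image of the open immersion U₁ → X₁). If Ū₁ is proper over Y, then the schematic closure of U₁ ×_Y X₂ in X₁ ×_Y X₂ is proper over X₂ (via the second projection). [This is the scheme-theoretic content, on special fibres of formal models, of the paper's Lemma on base change of relatively S-compact subspaces.] -/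
open AlgebraicGeometry CategoryTheory CategoryTheory.Limits

universe u

/-- `ι : Z ⟶ X` is the schematic closure (scheme-theoretic image) of `f : U ⟶ X`: it is a
closed immersion through which `f` factors, and it is the smallest such, i.e. it factors
through every closed immersion into `X` through which `f` factors. -/
def IsSchematicClosure {U X Z : Scheme.{u}} (f : U ⟶ X) (ι : Z ⟶ X) : Prop :=
  IsClosedImmersion ι ∧ (∃ g : U ⟶ Z, g ≫ ι = f) ∧
    ∀ ⦃Z' : Scheme.{u}⦄ (ι' : Z' ⟶ X), IsClosedImmersion ι' →
      (∃ g' : U ⟶ Z', g' ≫ ι' = f) → ∃ h : Z ⟶ Z', h ≫ ι' = ι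

/-!
The closure `Ū₁` is a closed subscheme of `X₁` containing `U₁`, so `Ū₁ ×_Y X₂` is a closed
subscheme of `X₁ ×_Y X₂` containing `U₁ ×_Y X₂`. By minimality, the schematic closure `W` of
`U₁ ×_Y X₂` is a closed subscheme of `Ū₁ ×_Y X₂`. Hence `W ⟶ X₂` is a closed immersion followed by
the base change of the proper morphism `Ū₁ ⟶ Y`, and is proper.
-/

namespace AlgebraicGeometry

lemma IsSchematicClosure.exists_isClosedImmersion_comp_eq {U X Z Z' : Scheme.{u}}
    {f : U ⟶ X} {ι : Z ⟶ X} (hι : IsSchematicClosure f ι) (ι' : Z' ⟶ X)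
    [IsClosedImmersion ι'] (g : U ⟶ Z') (hg : g ≫ ι' = f) :
    ∃ h : Z ⟶ Z', IsClosedImmersion h ∧ h ≫ ι' = ι := by
  obtain ⟨h, hh⟩ := hι.2.2 ι' inferInstance ⟨g, hg⟩
  have : IsClosedImmersion (h ≫ ι') := hh ▸ hι.1
  exact ⟨h, .of_comp_isClosedImmersion h ι', hh⟩

lemma isClosedImmersion_pullback_map {X Z X₂ Y : Scheme.{u}} (ι : Z ⟶ X) [IsClosedImmersion ι]
    (f : X ⟶ Y) (f₂ : X₂ ⟶ Y) :
    IsClosedImmersion (pullback.map (ι ≫ f) f₂ f f₂ ι (𝟙 X₂) (𝟙 Y) (by simp) (by simp)) :=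
  -- instance search does not derive this from `IsMultiplicative` here
  have := MorphismProperty.IsMultiplicative.toIsStableUnderComposition (W := @IsClosedImmersion)
  MorphismProperty.pullbackMap (P := @IsClosedImmersion) inferInstance inferInstance rfl
    (by simp)

end AlgebraicGeometry

theorem stmt_0
    (X₁ X₂ Y : Scheme.{u})
    (f₁ : X₁ ⟶ Y) (f₂ : X₂ ⟶ Y)
    (U₁ : X₁.Opens)
    (Z : Scheme.{u}) (ι : Z ⟶ X₁) (hZ : IsSchematicClosure U₁.ι ι)
    (hZproper : IsProper (ι ≫ f₁))
    (W : Scheme.{u}) (ιW : W ⟶ pullback f₁ f₂)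
    (hW : IsSchematicClosure
      (pullback.map (U₁.ι ≫ f₁) f₂ f₁ f₂ U₁.ι (𝟙 X₂) (𝟙 Y) (by simp) (by simp)) ιW) :
    IsProper (ιW ≫ pullback.snd f₁ f₂) := by
  obtain ⟨hι, ⟨g, hg⟩, -⟩ := hZ
  have := isClosedImmersion_pullback_map ι f₁ f₂
  obtain ⟨h, hh, rfl⟩ := hW.exists_isClosedImmersion_comp_eq
    (pullback.map (ι ≫ f₁) f₂ f₁ f₂ ι (𝟙 X₂) (𝟙 Y) _ _)
    (pullback.map (U₁.ι ≫ f₁) f₂ (ι ≫ f₁) f₂ g (𝟙 X₂) (𝟙 Y) (by simp [← hg]) (by simp))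
    (by rw [pullback.map_comp]; simp only [hg, Category.comp_id])
  rw [Category.assoc, pullback.lift_snd, Category.comp_id]
  infer_instance
end

section
/- Let K be a field that is algebraically closed and complete with respect to a nontrivial nonarchimedean multiplicative absolute value |·|, and let R = {a ∈ K : |a| ≤ 1}. Let f = Σ_j f_j X^j be a formal power series in m variables X₁, …, X_m over K (the sum running over multi-indices j ∈ ℤ_{≥0}^m). Suppose that for every point x = (x₁, …, x_m) ∈ K^m with |x_i| < 1 for all i, the family (f_j x^j)_j is summable and |Σ_j f_j x^j| ≤ 1. Then |f_j| ≤ 1 for every multi-index j; that is, f has all coefficients in R. -/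
/-!
Suppose `‖f n‖ > 1` for some index `n`. Since the value group of an algebraically closed field is
divisible, there is a radius `r = ‖c‖ < 1` with `‖f n‖ rⁿ > 1`, and on the sphere `‖x‖ = r` the
terms `‖f k‖ rᵏ` tend to `0`, so they attain a maximum `M > 1`; let `N` be the last index where
it is attained. Over an algebraically closed nonarchimedean field there are points of every
sphere `‖x‖ = r` at distance at least `r` from any finite set, so some `x` on the sphere stays that
far from all roots of the truncation `g = ∑_{k ≤ N} f k Xᵏ`. Factoring `g` gives `‖g(x)‖ ≥ M`,
while the tail of the series has norm `< M`; hence `‖f(x)‖ ≥ M > 1`, a contradiction.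
Several variables reduce to one: summing over the last `m` exponents first turns the series at
`(y, x)` into a series in `y` whose coefficients are the values at `x` of the slices `f (n, ·)`.
-/

open Polynomial Filter Topology IsUltrametricDist
open scoped NNReal

theorem exists_forall_le_of_finite_setOf_le {ι β : Type*} [LinearOrder β] {f : ι → β} (i₀ : ι)
    (hfin : {i | f i₀ ≤ f i}.Finite) : ∃ i, ∀ j, f j ≤ f i := by
  obtain ⟨i, hi₀i, hi⟩ := Set.exists_max_image _ f hfin ⟨i₀, le_rfl⟩
  exact ⟨i, fun j => (le_total (f i₀) (f j)).elim (hi j) fun hj => hj.trans hi₀i⟩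

theorem finite_setOf_le_of_tendsto_zero {ι : Type*} {a : ι → ℝ} (ha : Tendsto a cofinite (𝓝 0))
    {ε : ℝ} (hε : 0 < ε) : {i | ε ≤ a i}.Finite := by
  simpa only [not_lt] using eventually_cofinite.mp (ha.eventually (gt_mem_nhds hε))

-- Maximising `(a n, n)` lexicographically picks the last index where the maximum is attained.
theorem exists_greatest_argmax_of_tendsto_zero {a : ℕ → ℝ} (ha : Tendsto a cofinite (𝓝 0))
    {n₀ : ℕ} (hn₀ : 0 < a n₀) : ∃ N, (∀ n, a n ≤ a N) ∧ ∀ n, N < n → a n < a N := by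
  obtain ⟨N, hN⟩ := exists_forall_le_of_finite_setOf_le (f := fun n => toLex (a n, n)) n₀
    ((finite_setOf_le_of_tendsto_zero ha hn₀).subset fun n hn => (Prod.Lex.le_iff'.mp hn).1)
  have hN' n := Prod.Lex.le_iff'.mp (hN n)
  exact ⟨N, fun n => (hN' n).1, fun n hNn =>
    (hN' n).1.lt_of_ne fun h => hNn.not_ge ((hN' n).2 h)⟩

theorem IsUltrametricDist.norm_tsum_lt_of_forall_norm_lt {ι E : Type*} [SeminormedAddCommGroup E]
    [IsUltrametricDist E] {g : ι → E} (hg : Tendsto g cofinite (𝓝 0)) {C : ℝ} (hC : 0 < C)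
    (h : ∀ i, ‖g i‖ < C) : ‖∑' i, g i‖ < C := by
  by_cases hpos : ∃ i₀, 0 < ‖g i₀‖
  · obtain ⟨i₀, hi₀⟩ := hpos
    obtain ⟨i, hi⟩ := exists_forall_le_of_finite_setOf_le i₀
      (finite_setOf_le_of_tendsto_zero (tendsto_zero_iff_norm_tendsto_zero.mp hg) hi₀)
    exact (norm_tsum_le_of_forall_le_of_nonneg (norm_nonneg _) hi).trans_lt (h i)
  · push Not at hpos
    exact (norm_tsum_le_of_forall_le_of_nonneg le_rfl hpos).trans_lt hC

theorem IsUltrametricDist.norm_sub_eq_left_of_norm_lt {E : Type*} [SeminormedAddGroup E]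
    [IsUltrametricDist E] {x y : E} (h : ‖y‖ < ‖x‖) : ‖x - y‖ = ‖x‖ := by
  rw [sub_eq_add_neg, norm_add_eq_max_of_norm_ne_norm (by rw [norm_neg]; exact h.ne'), norm_neg,
    max_eq_left h.le]

theorem Polynomial.norm_leadingCoeff_mul_pow_natDegree_le_norm_eval {K : Type*} [NormedField K]
    [IsAlgClosed K] (p : K[X]) {x : K} {r : ℝ≥0} (h : ∀ ρ ∈ p.roots, r ≤ ‖x - ρ‖₊) :
    ‖p.leadingCoeff‖₊ * r ^ p.natDegree ≤ ‖p.eval x‖₊ := by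
  conv_rhs => rw [(IsAlgClosed.splits p).eq_prod_roots]
  rw [eval_mul, eval_C, eval_multiset_prod, nnnorm_mul, ← IsAlgClosed.card_roots_eq_natDegree]
  gcongr
  rw [← nnnormHom_apply, map_multiset_prod, Multiset.map_map, Multiset.map_map]
  simpa using Multiset.pow_card_le_prod (s := p.roots.map fun ρ => ‖x - ρ‖₊)
    (Multiset.forall_mem_map_iff.mpr h)

section AlgClosed

variable {K : Type*} [NormedField K] [IsUltrametricDist K] [IsAlgClosed K]

-- A root `u` of `∏_{a ∈ t} (X - a) + 1`, where `t` collects `0` and the points of `s` in the closed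
-- unit ball, has all `‖u - a‖ ≤ 1` with product `1`, hence all equal to `1`.
theorem exists_norm_eq_one_forall_one_le_norm_sub (s : Finset K) :
    ∃ u : K, ‖u‖ = 1 ∧ ∀ a ∈ s, 1 ≤ ‖u - a‖ := by
  classical
  set t := insert 0 (s.filter fun a => ‖a‖ ≤ 1)
  have ht : ∀ a ∈ t, ‖a‖ ≤ 1 := by
    simp only [t, Finset.mem_insert, Finset.mem_filter]
    rintro a (rfl | ⟨-, ha⟩) <;> simp [*]
  have hcard : t.card ≠ 0 := Finset.card_ne_zero_of_mem (Finset.mem_insert_self 0 _)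
  obtain ⟨u, hu⟩ := IsAlgClosed.exists_root (∏ a ∈ t, (X - C a) + 1) <| by
    rw [degree_add_eq_left_of_degree_lt] <;> simp [degree_prod, hcard, Nat.pos_of_ne_zero hcard]
  have hprod : ∏ a ∈ t, ‖u - a‖ = 1 := by
    have : ∏ a ∈ t, (u - a) = -1 := by
      simpa [eval_prod, eq_neg_iff_add_eq_zero] using hu
    simpa [← norm_prod] using congrArg norm this
  have hu1 : ‖u‖ ≤ 1 := by
    by_contra! hu1
    have hfac : ∀ a ∈ t, ‖u - a‖ = ‖u‖ := fun a ha =>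
      norm_sub_eq_left_of_norm_lt ((ht a ha).trans_lt hu1)
    rw [Finset.prod_congr rfl hfac, Finset.prod_const] at hprod
    exact (one_lt_pow₀ hu1 hcard).ne' hprod
  have hfac : ∀ a ∈ t, ‖u - a‖ = 1 := by
    have hle : ∀ a ∈ t, ‖u - a‖₊ ≤ 1 := fun a ha => by
      rw [← NNReal.coe_le_coe, coe_nnnorm, sub_eq_add_neg]
      exact (norm_add_le_max _ _).trans (max_le hu1 (by simpa using ht a ha))
    have := (Finset.prod_eq_one_iff_of_le_one' hle).mp (NNReal.eq (by simpa using hprod))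
    exact fun a ha => congrArg NNReal.toReal (this a ha)
  have hu : ‖u‖ = 1 := by simpa using hfac 0 (Finset.mem_insert_self 0 _)
  refine ⟨u, hu, fun a ha => ?_⟩
  by_cases ha1 : ‖a‖ ≤ 1
  · exact (hfac a (Finset.mem_insert_of_mem (Finset.mem_filter.mpr ⟨ha, ha1⟩))).ge
  · rw [not_le] at ha1
    rw [norm_sub_rev, norm_sub_eq_left_of_norm_lt (hu ▸ ha1)]
    exact ha1.le

theorem exists_norm_eq_forall_le_norm_sub [DecidableEq K] {c : K} (hc : c ≠ 0) (s : Finset K) :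
    ∃ x : K, ‖x‖ = ‖c‖ ∧ ∀ a ∈ s, ‖c‖ ≤ ‖x - a‖ := by
  obtain ⟨u, hu, hsep⟩ := exists_norm_eq_one_forall_one_le_norm_sub (s.image (c⁻¹ * ·))
  refine ⟨c * u, by rw [norm_mul, hu, mul_one], fun a ha => ?_⟩
  have : c * u - a = c * (u - c⁻¹ * a) := by field_simp
  rw [this, norm_mul]
  exact le_mul_of_one_le_right (norm_nonneg c) (hsep _ (Finset.mem_image_of_mem _ ha))

theorem exists_norm_eq_norm_coeff_mul_pow_le_norm_tsum {f : ℕ → K} {c : K} (hc : c ≠ 0)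
    (hf : ∀ x : K, ‖x‖ = ‖c‖ → Summable fun n => f n * x ^ n) (n₀ : ℕ) :
    ∃ x : K, ‖x‖ = ‖c‖ ∧ ‖f n₀‖ * ‖c‖ ^ n₀ ≤ ‖∑' n, f n * x ^ n‖ := by
  classical
  rcases eq_or_ne (f n₀) 0 with h0 | h0
  · exact ⟨c, rfl, by simp [h0]⟩
  set a : ℕ → ℝ := fun n => ‖f n‖ * ‖c‖ ^ n
  have ha : ∀ {x : K}, ‖x‖ = ‖c‖ → ∀ n, ‖f n * x ^ n‖ = a n := fun hx n => by
    rw [norm_mul, norm_pow, hx]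
  have ha₀ : 0 < a n₀ := by positivity
  obtain ⟨N, hmax, hlast⟩ := exists_greatest_argmax_of_tendsto_zero
    (by simpa [ha rfl] using (hf c rfl).tendsto_cofinite_zero.norm) ha₀
  set g := PowerSeries.trunc (N + 1) (PowerSeries.mk f)
  have hgN : g.coeff N = f N := by simp [g, PowerSeries.coeff_trunc]
  have hfN : f N ≠ 0 := fun h => ha₀.not_ge (by simpa [a, h] using hmax n₀)
  have hgdeg : g.natDegree = N := natDegree_eq_of_le_of_coeff_ne_zero
    (Nat.lt_succ_iff.mp (PowerSeries.natDegree_trunc_lt _ _)) (hgN ▸ hfN)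
  obtain ⟨x, hx, hsep⟩ := exists_norm_eq_forall_le_norm_sub hc g.roots.toFinset
  have hhead : a N ≤ ‖g.eval x‖ := by
    have := g.norm_leadingCoeff_mul_pow_natDegree_le_norm_eval (x := x) (r := ‖c‖₊)
      fun ρ hρ => hsep ρ (Multiset.mem_toFinset.mpr hρ)
    rwa [leadingCoeff, hgdeg, hgN, ← NNReal.coe_le_coe] at this
  have htail : ‖∑' i, f (i + (N + 1)) * x ^ (i + (N + 1))‖ < a N := by
    refine norm_tsum_lt_of_forall_norm_lt ?_ (ha₀.trans_le (hmax n₀)) fun i => ?_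
    · exact (hf x hx).tendsto_cofinite_zero.comp (add_left_injective (N + 1)).tendsto_cofinite
    · exact (ha hx _).trans_lt (hlast _ (by omega))
  have heval : g.eval x = ∑ n ∈ Finset.range (N + 1), f n * x ^ n := by
    simp [g, ← eval₂_id, PowerSeries.eval₂_trunc_eq_sum_range]
  refine ⟨x, hx, (hmax n₀).trans ?_⟩
  rw [← (hf x hx).sum_add_tsum_nat_add (N + 1), ← heval,
    norm_add_eq_max_of_norm_ne_norm (htail.trans_le hhead).ne']
  exact hhead.trans (le_max_left _ _)

end AlgClosed

section OneVariable

variable {K : Type*} [NontriviallyNormedField K] [IsAlgClosed K]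

-- `c` is a `k`-th root of `c₀⁻¹` with `‖c₀‖ > 1`, so `‖c‖ = ‖c₀‖ ^ (-1/k)` tends to `1` with `k`.
theorem exists_norm_lt_one_one_lt_mul_norm_pow {t : ℝ} (ht : 1 < t) (n : ℕ) :
    ∃ c : K, c ≠ 0 ∧ ‖c‖ < 1 ∧ 1 < t * ‖c‖ ^ n := by
  obtain ⟨c₀, hc₀⟩ := NormedField.exists_one_lt_norm K
  obtain ⟨k, hk⟩ := pow_unbounded_of_one_lt (‖c₀‖ ^ n) ht
  have hk0 : k ≠ 0 := by
    rintro rfl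
    exact (one_le_pow₀ hc₀.le).not_gt (by simpa using hk)
  obtain ⟨c, hck⟩ := IsAlgClosed.exists_pow_nat_eq c₀⁻¹ (Nat.pos_of_ne_zero hk0)
  have hc : ‖c‖ ^ k = ‖c₀‖⁻¹ := by rw [← norm_pow, hck, norm_inv]
  refine ⟨c, ?_, ?_, ?_⟩
  · rintro rfl
    rw [norm_zero, zero_pow hk0] at hc
    exact (inv_pos.mpr (one_pos.trans hc₀)).ne hc
  · exact (pow_lt_one_iff_of_nonneg (norm_nonneg c) hk0).mp (hc ▸ inv_lt_one_of_one_lt₀ hc₀)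
  · refine (one_lt_pow_iff_of_nonneg (by positivity) hk0).mp ?_
    rw [mul_pow, ← pow_mul, mul_comm n k, pow_mul, hc, inv_pow]
    exact (lt_mul_inv_iff₀ (by positivity)).mpr (by simpa using hk)

theorem norm_coeff_le_one_of_forall_norm_tsum_le_one [IsUltrametricDist K] {f : ℕ → K}
    (hf : ∀ y : K, ‖y‖ < 1 → Summable (fun n => f n * y ^ n) ∧ ‖∑' n, f n * y ^ n‖ ≤ 1) (n : ℕ) :
    ‖f n‖ ≤ 1 := by
  by_contra! hn
  obtain ⟨c, hc0, hc1, hc⟩ := exists_norm_lt_one_one_lt_mul_norm_pow (K := K) hn n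
  obtain ⟨x, hx, hle⟩ :=
    exists_norm_eq_norm_coeff_mul_pow_le_norm_tsum hc0 (fun x hx => (hf x (hx ▸ hc1)).1) n
  exact (hc.trans_le hle).not_ge (hf x (hx ▸ hc1)).2

end OneVariable

section Polydisc

variable {K : Type*} [NontriviallyNormedField K]

def BoundedByOneOnOpenPolydisc {m : ℕ} (f : (Fin m → ℕ) → K) : Prop :=
  ∀ x : Fin m → K, (∀ i, ‖x i‖ < 1) →
    Summable (fun j : Fin m → ℕ => f j * ∏ i, x i ^ j i) ∧
      ‖∑' j : Fin m → ℕ, f j * ∏ i, x i ^ j i‖ ≤ 1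

theorem prod_cons_pow_cons {m : ℕ} (y : K) (x : Fin m → K) (n : ℕ) (j : Fin m → ℕ) :
    ∏ i, (Fin.cons y x : Fin (m + 1) → K) i ^ (Fin.cons n j : Fin (m + 1) → ℕ) i =
      y ^ n * ∏ i, x i ^ j i := by
  simp [Fin.prod_univ_succ]

theorem BoundedByOneOnOpenPolydisc.norm_le_one {f : (Fin 0 → ℕ) → K}
    (hf : BoundedByOneOnOpenPolydisc f) (j : Fin 0 → ℕ) : ‖f j‖ ≤ 1 := by
  have := (hf 0 finZeroElim).2
  rwa [tsum_eq_single j fun j' hj' => (hj' (Subsingleton.elim j' j)).elim, Finset.univ_eq_empty,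
    Finset.prod_empty, mul_one] at this

variable [CompleteSpace K] [IsUltrametricDist K] [IsAlgClosed K]

theorem BoundedByOneOnOpenPolydisc.slice {m : ℕ} {f : (Fin (m + 1) → ℕ) → K}
    (hf : BoundedByOneOnOpenPolydisc f) (n : ℕ) :
    BoundedByOneOnOpenPolydisc fun j : Fin m → ℕ => f (Fin.cons n j) := by
  intro x hx
  have hcons : ∀ y : K, ‖y‖ < 1 → ∀ i, ‖(Fin.cons y x : Fin (m + 1) → K) i‖ < 1 :=
    fun y hy i => Fin.cases hy hx i
  have hsummable : ∀ k, Summable fun j => f (Fin.cons k j) * ∏ i, x i ^ j i := by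
    intro k
    obtain ⟨y, hy0, hy1⟩ := NormedField.exists_norm_lt_one K
    refine (((hf _ (hcons y hy1)).1.comp_injective (Fin.cons_right_injective k)).mul_left
      (y ^ k)⁻¹).congr fun j => ?_
    have : y ≠ 0 := norm_pos_iff.mp hy0
    simp only [Function.comp_apply, prod_cons_pow_cons]
    field_simp
  refine ⟨hsummable n, norm_coeff_le_one_of_forall_norm_tsum_le_one
    (f := fun k => ∑' j, f (Fin.cons k j) * ∏ i, x i ^ j i) (fun y hy => ?_) n⟩
  obtain ⟨hs, hb⟩ := hf _ (hcons y hy)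
  have hsum : HasSum (fun k => (∑' j, f (Fin.cons k j) * ∏ i, x i ^ j i) * y ^ k)
      (∑' j, f j * ∏ i, (Fin.cons y x : Fin (m + 1) → K) i ^ j i) := by
    refine HasSum.prod_fiberwise
      (f := fun p => (f (Fin.cons p.1 p.2) * ∏ i, x i ^ p.2 i) * y ^ p.1) ?_
      fun k => (hsummable k).hasSum.mul_right (y ^ k)
    convert (Fin.consEquiv fun _ => ℕ).hasSum_iff.mpr hs.hasSum using 2 with p
    simp only [Fin.consEquiv, Equiv.coe_fn_mk, Function.comp_apply, prod_cons_pow_cons]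
    ring
  exact ⟨hsum.summable, hsum.tsum_eq ▸ hb⟩

end Polydisc

/-- Let `K` be an algebraically closed field, complete with respect to a
nontrivial nonarchimedean multiplicative absolute value. If a formal power series
`f = Σ_j f_j X^j` in `m` variables over `K` is summable at every point `x` of the open unit
polydisc and the values satisfy `|Σ_j f_j x^j| ≤ 1`, then all coefficients satisfy
`|f_j| ≤ 1`. -/
theorem stmt_2 {K : Type*} [NontriviallyNormedField K] [CompleteSpace K]
    [IsUltrametricDist K] [IsAlgClosed K] (m : ℕ) (f : (Fin m → ℕ) → K)
    (hf : ∀ x : Fin m → K, (∀ i, ‖x i‖ < 1) →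
      Summable (fun j : Fin m → ℕ => f j * ∏ i, x i ^ j i) ∧
        ‖∑' j : Fin m → ℕ, f j * ∏ i, x i ^ j i‖ ≤ 1) :
    ∀ j : Fin m → ℕ, ‖f j‖ ≤ 1 := by
  induction m with
  | zero => exact BoundedByOneOnOpenPolydisc.norm_le_one hf
  | succ m ih =>
    intro j
    simpa using ih _ (BoundedByOneOnOpenPolydisc.slice hf (j 0)) (Fin.tail j)
end

section
/- Let K be a field with a nonarchimedean multiplicative absolute value |·|, let ε be a real number with 0 < ε < 1, and let λ ≥ 1 be an integer. Let v : ℤ → K and w : ℤ × ℤ → K be families of elements such that: |v(j)| ≤ 1 for all j ∈ ℤ; |w(j,k)| ≤ ε^{|j|+|k|} for all j, k ∈ ℤ; and |v(−j) − w(j,j)| ≤ ε^{2λ} for all j ∈ ℤ. Then |v(j)| ≤ ε^{2|j|} for all j ∈ ℤ with |j| ≤ λ, and |v(j)| ≤ ε^{2λ} for all j ∈ ℤ with |j| ≥ λ. [This is the coefficient estimate at the heart of the paper's key lemma producing, from a function on the unit annulus, an approximating function that extends to a larger annulus.] -/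
lemma IsUltrametricDist.norm_le_of_norm_sub_le {E : Type*} [SeminormedAddCommGroup E]
    [IsUltrametricDist E] {a b : E} {r : ℝ} (hab : ‖a - b‖ ≤ r) (hb : ‖b‖ ≤ r) : ‖a‖ ≤ r :=
  calc ‖a‖ = ‖(a - b) + b‖ := by rw [sub_add_cancel]
    _ ≤ max ‖a - b‖ ‖b‖ := norm_add_le_max _ _
    _ ≤ r := max_le hab hb

lemma norm_le_pow_two_mul_min {K : Type*} [NormedField K] [IsUltrametricDist K]
    {ε : ℝ} (hε0 : 0 < ε) (hε1 : ε < 1) (lam : ℕ) (v : ℤ → K) (w : ℤ × ℤ → K)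
    (hw : ∀ j k : ℤ, ‖w (j, k)‖ ≤ ε ^ (j.natAbs + k.natAbs))
    (hvw : ∀ j : ℤ, ‖v (-j) - w (j, j)‖ ≤ ε ^ (2 * lam)) (j : ℤ) :
    ‖v j‖ ≤ ε ^ (2 * min lam j.natAbs) := by
  have anti := pow_right_anti₀ hε0.le hε1.le
  have hdiff : ‖v j - w (-j, -j)‖ ≤ ε ^ (2 * lam) := by simpa using hvw (-j)
  have hsmall : ‖w (-j, -j)‖ ≤ ε ^ (2 * j.natAbs) := by simpa [two_mul] using hw (-j) (-j)
  exact IsUltrametricDist.norm_le_of_norm_sub_le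
    (hdiff.trans (anti (by omega))) (hsmall.trans (anti (by omega)))

theorem stmt_9_general {K : Type*} [NormedField K] [IsUltrametricDist K]
    (ε : ℝ) (hε0 : 0 < ε) (hε1 : ε < 1) (lam : ℕ)
    (v : ℤ → K) (w : ℤ × ℤ → K)
    (hw : ∀ j k : ℤ, ‖w (j, k)‖ ≤ ε ^ (j.natAbs + k.natAbs))
    (hvw : ∀ j : ℤ, ‖v (-j) - w (j, j)‖ ≤ ε ^ (2 * lam)) :
    (∀ j : ℤ, j.natAbs ≤ lam → ‖v j‖ ≤ ε ^ (2 * j.natAbs)) ∧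
      (∀ j : ℤ, lam ≤ j.natAbs → ‖v j‖ ≤ ε ^ (2 * lam)) := by
  have key := norm_le_pow_two_mul_min hε0 hε1 lam v w hw hvw
  constructor
  · intro j hj
    simpa [min_eq_right hj] using key j
  · intro j hj
    simpa [min_eq_left hj] using key j

/-- Let `K` be a field with a nonarchimedean multiplicative absolute value,
`0 < ε < 1` and `λ ≥ 1` an integer. If `|v(j)| ≤ 1` for all `j`, `|w(j,k)| ≤ ε^(|j|+|k|)`
for all `j, k`, and `|v(−j) − w(j,j)| ≤ ε^(2λ)` for all `j`, then `|v(j)| ≤ ε^(2|j|)`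
for `|j| ≤ λ` and `|v(j)| ≤ ε^(2λ)` for `|j| ≥ λ`. -/
theorem stmt_9 {K : Type*} [NormedField K] [IsUltrametricDist K]
    (ε : ℝ) (hε0 : 0 < ε) (hε1 : ε < 1) (lam : ℕ) (hlam : 1 ≤ lam)
    (v : ℤ → K) (w : ℤ × ℤ → K)
    (hv : ∀ j : ℤ, ‖v j‖ ≤ 1)
    (hw : ∀ j k : ℤ, ‖w (j, k)‖ ≤ ε ^ (j.natAbs + k.natAbs))
    (hvw : ∀ j : ℤ, ‖v (-j) - w (j, j)‖ ≤ ε ^ (2 * lam)) :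
    (∀ j : ℤ, j.natAbs ≤ lam → ‖v j‖ ≤ ε ^ (2 * j.natAbs)) ∧
      (∀ j : ℤ, lam ≤ j.natAbs → ‖v j‖ ≤ ε ^ (2 * lam)) :=
  stmt_9_general ε hε0 hε1 lam v w hw hvw
end

section
/- Let K be a field equipped with a multiplicative absolute value |·| : K^× → ℝ_{>0} (a group homomorphism), let ε be a real number with 0 < ε < 1, and let π ∈ K^× satisfy |π| = ε. Let G be a commutative group, let A = {x ∈ K^× : ε ≤ |x| ≤ ε^{-1}}, and let ψ : A → G be a map satisfying ψ(x)·ψ(y) = ψ(xy) for all x, y ∈ A with xy ∈ A. Then there exists a unique group homomorphism φ : K^× → G such that φ(x) = ψ(x) for all x ∈ A. [This is the gluing step concluding the proof of the main theorem: a morphism on the annulus satisfying the homomorphism identity whenever it makes sense extends uniquely to a homomorphism on the whole multiplicative group.] -/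
/-!
Every `x` is moved into the annulus `A` by some power `πⁿ`, and `φ x := ψ (πⁿ x) / ψ(π)ⁿ` does
not depend on the admissible `n`: the admissible exponents form an interval, and between
consecutive ones the partial homomorphism property applied to `π ∈ A` changes both factors by
`ψ π`. For multiplicativity, normalise `x` and `y` into the lower half `ε ≤ |·| ≤ 1` of `A`;
then `xy` lies in `A` or needs exactly one extra factor `π⁻¹`, and in the latter case `π⁻¹ x`
and `π⁻¹ x y` are both in `A`. Uniqueness holds because `A` generates the group.
-/

open Set

section Annulus

variable {M G : Type*} [CommGroup M] [CommGroup G]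

def annulus (v : M →* ℝ) (π : M) : Set M := {x | v π ≤ v x ∧ v x ≤ (v π)⁻¹}

def IsPartialHom (ψ : M → G) (A : Set M) : Prop :=
  ∀ x ∈ A, ∀ y ∈ A, x * y ∈ A → ψ x * ψ y = ψ (x * y)

variable {v : M →* ℝ} {π : M}

lemma map_zpow_mul (n : ℤ) (x : M) : v (π ^ n * x) = v π ^ n * v x := by
  rw [map_mul, map_zpow]

lemma zpow_mul_mem_annulus_of_le_of_le (hv : ∀ x, 0 < v x) (hπ : v π ≤ 1) {x : M} {m k n : ℤ}
    (hmk : m ≤ k) (hkn : k ≤ n) (hm : π ^ m * x ∈ annulus v π) (hn : π ^ n * x ∈ annulus v π) :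
    π ^ k * x ∈ annulus v π := by
  simp only [annulus, mem_ofPred_eq, map_zpow_mul] at *
  have hx := (hv x).le
  exact ⟨hn.1.trans (mul_le_mul_of_nonneg_right (zpow_le_zpow_right_of_le_one₀ (hv π) hπ hkn) hx),
    (mul_le_mul_of_nonneg_right (zpow_le_zpow_right_of_le_one₀ (hv π) hπ hmk) hx).trans hm.2⟩

lemma mem_annulus_of_mem_Icc (hπ0 : 0 < v π) (hπ : v π ≤ 1) {x : M} (hx : v x ∈ Icc (v π) 1) :
    x ∈ annulus v π :=
  ⟨hx.1, hx.2.trans ((one_le_inv₀ hπ0).2 hπ)⟩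

lemma exists_zpow_mul_mem_Icc (hv : ∀ x, 0 < v x) (hπ : v π < 1) (x : M) :
    ∃ n : ℤ, v (π ^ n * x) ∈ Icc (v π) 1 := by
  obtain ⟨n, hlo, hhi⟩ := exists_mem_Ioc_zpow (hv x) ((one_lt_inv₀ (hv π)).2 hπ)
  have hπn : 0 < v π ^ (n + 1) := zpow_pos (hv π) _
  rw [inv_zpow] at hlo hhi
  refine ⟨n + 1, ?_, ?_⟩ <;> rw [map_zpow_mul]
  · calc v π = v π ^ (n + 1) * (v π ^ n)⁻¹ := by
          rw [zpow_add_one₀ (hv π).ne', mul_comm, inv_mul_cancel_left₀ (zpow_pos (hv π) n).ne']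
      _ ≤ v π ^ (n + 1) * v x := by gcongr
  · calc v π ^ (n + 1) * v x ≤ v π ^ (n + 1) * (v π ^ (n + 1))⁻¹ := by gcongr
      _ = 1 := mul_inv_cancel₀ hπn.ne'

lemma mul_mem_annulus_or (hv : ∀ x, 0 < v x) (hπ : v π ≤ 1) {a b : M}
    (ha : v a ∈ Icc (v π) 1) (hb : v b ∈ Icc (v π) 1) :
    a * b ∈ annulus v π ∨ π⁻¹ * a ∈ annulus v π ∧ π⁻¹ * a * b ∈ annulus v π := by
  simp only [annulus, mem_ofPred_eq, map_mul, map_inv, mem_Icc, mul_assoc] at *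
  have hπ0 := hv π
  have hπ0' := (inv_pos.2 hπ0).le
  rcases le_or_gt (v π) (v a * v b) with h | h
  · exact .inl ⟨h, by nlinarith [(one_le_inv₀ hπ0).2 hπ]⟩
  · refine .inr ⟨⟨?_, mul_le_of_le_one_right hπ0' ha.2⟩, ?_,
      mul_le_of_le_one_right hπ0' (by linarith)⟩
    all_goals rw [le_inv_mul_iff₀ hπ0]; nlinarith

variable {ψ : M → G}

lemma apply_zpow_add_one_mul (hψ : IsPartialHom ψ (annulus v π)) (hπA : π ∈ annulus v π)
    {x : M} {n : ℤ} (hn : π ^ n * x ∈ annulus v π) (hn' : π ^ (n + 1) * x ∈ annulus v π) :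
    ψ (π ^ (n + 1) * x) = ψ π * ψ (π ^ n * x) := by
  rw [zpow_add_one, mul_comm _ π, mul_assoc] at hn' ⊢
  exact (hψ π hπA _ hn hn').symm

lemma div_zpow_eq_of_zpow_mul_mem_annulus (hv : ∀ x, 0 < v x) (hπ : v π ≤ 1)
    (hψ : IsPartialHom ψ (annulus v π)) {x : M} {m n : ℤ}
    (hm : π ^ m * x ∈ annulus v π) (hn : π ^ n * x ∈ annulus v π) :
    ψ (π ^ m * x) / ψ π ^ m = ψ (π ^ n * x) / ψ π ^ n := by
  wlog hmn : m ≤ n generalizing m n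
  · exact (this hn hm (le_of_not_ge hmn)).symm
  induction n, hmn using Int.leInduction with
  | base => rfl
  | succ n hmn ih =>
    have hn' := zpow_mul_mem_annulus_of_le_of_le hv hπ hmn (Int.le_add_one le_rfl) hm hn
    rw [ih hn', apply_zpow_add_one_mul hψ (mem_annulus_of_mem_Icc (hv π) hπ ⟨le_rfl, hπ⟩) hn' hn,
      zpow_add_one, mul_comm (ψ π ^ n), mul_div_mul_left_eq_div]

lemma exists_zpow_mul_mem_annulus_div_zpow_eq (hv : ∀ x, 0 < v x) (hπ : v π ≤ 1)
    (hψ : IsPartialHom ψ (annulus v π)) {a b : M}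
    (ha : v a ∈ Icc (v π) 1) (hb : v b ∈ Icc (v π) 1) :
    ∃ k : ℤ, π ^ k * (a * b) ∈ annulus v π ∧ ψ (π ^ k * (a * b)) / ψ π ^ k = ψ a * ψ b := by
  have hπA := mem_annulus_of_mem_Icc (hv π) hπ ⟨le_rfl, hπ⟩
  have haA := mem_annulus_of_mem_Icc (hv π) hπ ha
  have hbA := mem_annulus_of_mem_Icc (hv π) hπ hb
  rcases mul_mem_annulus_or hv hπ ha hb with hab | ⟨ha', hab'⟩
  · exact ⟨0, by simpa using hab, by simpa using (hψ a haA b hbA hab).symm⟩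
  · refine ⟨-1, by simpa [mul_assoc] using hab', ?_⟩
    have hπa : π * (π⁻¹ * a) = a := mul_inv_cancel_left π a
    calc ψ (π ^ (-1 : ℤ) * (a * b)) / ψ π ^ (-1 : ℤ) = ψ (π⁻¹ * a * b) * ψ π := by
          simp [mul_assoc]
      _ = ψ π * ψ (π⁻¹ * a) * ψ b := by
          rw [← hψ _ ha' b hbA hab']; ac_rfl
      _ = ψ a * ψ b := by rw [hψ π hπA _ ha' (by rwa [hπa]), hπa]

lemma exists_monoidHom_eqOn_annulus (hv : ∀ x, 0 < v x) (hπ : v π < 1)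
    (hψ : IsPartialHom ψ (annulus v π)) : ∃ φ : M →* G, EqOn φ ψ (annulus v π) := by
  choose N hN using exists_zpow_mul_mem_Icc hv hπ
  have hNA x : π ^ N x * x ∈ annulus v π := mem_annulus_of_mem_Icc (hv π) hπ.le (hN x)
  have hf {x : M} {n : ℤ} (hn : π ^ n * x ∈ annulus v π) :
      ψ (π ^ N x * x) / ψ π ^ N x = ψ (π ^ n * x) / ψ π ^ n :=
    div_zpow_eq_of_zpow_mul_mem_annulus hv hπ.le hψ (hNA x) hn
  refine ⟨MonoidHom.mk' (fun x ↦ ψ (π ^ N x * x) / ψ π ^ N x) fun x y ↦ ?_, fun x hx ↦ ?_⟩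
  · obtain ⟨k, hk, hkψ⟩ := exists_zpow_mul_mem_annulus_div_zpow_eq hv hπ.le hψ (hN x) (hN y)
    have hxy : π ^ k * (π ^ N x * x * (π ^ N y * y)) = π ^ (k + N x + N y) * (x * y) := by
      simp only [zpow_add]; ac_rfl
    rw [hxy] at hk hkψ
    rw [hf hk, zpow_add (ψ π), zpow_add (ψ π), ← div_div, ← div_div, hkψ, div_div,
      div_mul_div_comm]
  · simpa using hf (n := 0) (by simpa using hx)

lemma closure_annulus (hv : ∀ x, 0 < v x) (hπ : v π < 1) :
    Subgroup.closure (annulus v π) = ⊤ := by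
  refine eq_top_iff.2 fun x _ ↦ ?_
  obtain ⟨n, hn⟩ := exists_zpow_mul_mem_Icc hv hπ x
  have hπA := mem_annulus_of_mem_Icc (hv π) hπ.le ⟨le_rfl, hπ.le⟩
  simpa using Subgroup.mul_mem _ (Subgroup.zpow_mem _ (Subgroup.subset_closure hπA) (-n))
    (Subgroup.subset_closure (mem_annulus_of_mem_Icc (hv π) hπ.le hn))

theorem existsUnique_monoidHom_eqOn_annulus (hv : ∀ x, 0 < v x) (hπ : v π < 1)
    (hψ : IsPartialHom ψ (annulus v π)) : ∃! φ : M →* G, EqOn φ ψ (annulus v π) := by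
  obtain ⟨φ, hφ⟩ := exists_monoidHom_eqOn_annulus hv hπ hψ
  exact ⟨φ, hφ, fun φ' hφ' ↦ MonoidHom.eq_of_eqOn_dense (closure_annulus hv hπ) (hφ'.trans hφ.symm)⟩

end Annulus

theorem stmt_11_general {K : Type*} [Field K] {G : Type*} [CommGroup G]
    (v : Kˣ → ℝ) (hv_pos : ∀ x, 0 < v x) (hv_mul : ∀ x y, v (x * y) = v x * v y)
    (ε : ℝ) (hε1 : ε < 1) (π : Kˣ) (hπ : v π = ε)
    (A : Set Kˣ) (hA : A = {x : Kˣ | ε ≤ v x ∧ v x ≤ ε⁻¹})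
    (ψ : A → G)
    (hψ : ∀ (x y : Kˣ) (hx : x ∈ A) (hy : y ∈ A) (hxy : x * y ∈ A),
      ψ ⟨x, hx⟩ * ψ ⟨y, hy⟩ = ψ ⟨x * y, hxy⟩) :
    ∃! φ : Kˣ →* G, ∀ (x : Kˣ) (hx : x ∈ A), φ x = ψ ⟨x, hx⟩ := by
  let V : Kˣ →* ℝ := ⟨⟨v, (mul_eq_left₀ (hv_pos 1).ne').1 (by rw [← hv_mul, one_mul])⟩, hv_mul⟩
  have hAV : A = annulus V π := by rw [hA, ← hπ]; rfl
  subst hAV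
  classical
  let ψ' (x : Kˣ) : G := if hx : x ∈ annulus V π then ψ ⟨x, hx⟩ else 1
  have hψ' : IsPartialHom ψ' (annulus V π) := fun x hx y hy hxy ↦ by
    simpa [ψ', hx, hy, hxy] using hψ x y hx hy hxy
  have hφ (φ : Kˣ →* G) : EqOn φ ψ' (annulus V π) ↔ ∀ x hx, φ x = ψ ⟨x, hx⟩ := by
    simp only [EqOn, ψ']
    exact forall_congr' fun x ↦ forall_congr' fun hx ↦ by rw [dif_pos hx]
  exact (existsUnique_congr hφ).1
    (existsUnique_monoidHom_eqOn_annulus hv_pos (hπ.trans_lt hε1) hψ')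

/-- Let `K` be a field with a multiplicative absolute value
`v : Kˣ → ℝ_{>0}`, let `0 < ε < 1` and `π ∈ Kˣ` with `v π = ε`. Let `G` be a commutative
group, `A = {x ∈ Kˣ : ε ≤ v x ≤ ε⁻¹}` the annulus, and `ψ : A → G` a map satisfying
`ψ(x)·ψ(y) = ψ(xy)` whenever `x, y, xy ∈ A`. Then `ψ` extends uniquely to a group
homomorphism `φ : Kˣ → G`. -/
theorem stmt_11 {K : Type*} [Field K] {G : Type*} [CommGroup G]
    (v : Kˣ → ℝ) (hv_pos : ∀ x, 0 < v x) (hv_mul : ∀ x y, v (x * y) = v x * v y)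
    (ε : ℝ) (hε0 : 0 < ε) (hε1 : ε < 1) (π : Kˣ) (hπ : v π = ε)
    (A : Set Kˣ) (hA : A = {x : Kˣ | ε ≤ v x ∧ v x ≤ ε⁻¹})
    (ψ : A → G)
    (hψ : ∀ (x y : Kˣ) (hx : x ∈ A) (hy : y ∈ A) (hxy : x * y ∈ A),
      ψ ⟨x, hx⟩ * ψ ⟨y, hy⟩ = ψ ⟨x * y, hxy⟩) :
    ∃! φ : Kˣ →* G, ∀ (x : Kˣ) (hx : x ∈ A), φ x = ψ ⟨x, hx⟩ :=
  stmt_11_general v hv_pos hv_mul ε hε1 π hπ A hA ψ hψ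
end
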